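/- arXiv:math/0601579 — 11 statements merged into one kernel-verified Lean document; each statement's English description precedes it below -/
import Mathlib

section
/- If the induced representation (S_a, M; α, β) given by m ∗ s = m·(αsβ) is faithful, then the original representation (S, M) is faithful. -/
/-- Any product `x * ↑s * y` in `S¹ = WithOne S` with middle factor in `S` lies in `S`. -/
theorem exists_coe_eq {S : Type*} [Semigroup S] (x y : WithOne S) (s : S) :
    ∃ z : S, (z : WithOne S) = x * ↑s * y := by
  induction x using WithOne.recOneCoe with
  | one => induction y using WithOne.recOneCoe with
    | one => exact ⟨s, by simp⟩
    | coe b => exact ⟨s * b, by simp⟩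
  | coe a => induction y using WithOne.recOneCoe with
    | one => exact ⟨a * s, by simp⟩
    | coe b => exact ⟨a * s * b, by simp [mul_assoc]⟩

/-- The element `x s y ∈ S` for `x, y ∈ S¹`, `s ∈ S`. -/
noncomputable def sand3 {S : Type*} [Semigroup S] (x : WithOne S) (s : S) (y : WithOne S) : S :=
  (exists_coe_eq x y s).choose

theorem sand3_spec {S : Type*} [Semigroup S] (x : WithOne S) (s : S) (y : WithOne S) :
    (↑(sand3 x s y) : WithOne S) = x * ↑s * y :=
  (exists_coe_eq x y s).choose_spec

/-- `sand b c s = b s c ∈ S` for `b, c ∈ S¹`, `s ∈ S`. -/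
noncomputable def sand {S : Type*} [Semigroup S] (b c : WithOne S) (s : S) : S := sand3 b s c

def actOne {S M : Type*} (act : M → S → M) (m : M) : WithOne S → M :=
  WithOne.recOneCoe m (act m)

@[simp]
theorem actOne_one {S M : Type*} (act : M → S → M) (m : M) : actOne act m 1 = m := rfl

@[simp]
theorem actOne_coe {S M : Type*} (act : M → S → M) (m : M) (s : S) :
    actOne act m s = act m s := rfl

theorem actOne_mul {S M : Type*} [Semigroup S]
    (act : M → S → M) (hact : ∀ (m : M) (s t : S), act m (s * t) = act (act m s) t)
    (m : M) (x y : WithOne S) : actOne act m (x * y) = actOne act (actOne act m x) y := by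
  induction x using WithOne.recOneCoe <;> induction y using WithOne.recOneCoe <;>
    simp [← WithOne.coe_mul, hact]

theorem act_sand {S M : Type*} [Semigroup S]
    (act : M → S → M) (hact : ∀ (m : M) (s t : S), act m (s * t) = act (act m s) t)
    (α β : WithOne S) (m : M) (s : S) :
    act m (sand α β s) = actOne act (act (actOne act m α) s) β := by
  rw [← actOne_coe act, sand, sand3_spec, actOne_mul act hact, actOne_mul act hact, actOne_coe]

theorem faithful_of_induced_faithful_general {S M : Type*} [Semigroup S]
    (act : M → S → M) (hact : ∀ (m : M) (s t : S), act m (s * t) = act (act m s) t)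
    (α β : WithOne S)
    (hfaith : ∀ s t : S, (∀ m : M, act m (sand α β s) = act m (sand α β t)) → s = t) :
    ∀ s t : S, (∀ m : M, act m s = act m t) → s = t := by
  intro s t h
  refine hfaith s t fun m => ?_
  rw [act_sand act hact, act_sand act hact, h]

/-- If the induced representation `(S_a, M; α, β)`, `m ∗ s = m · (α s β)`, is faithful,
then so is the original representation `(S, M)`. -/
theorem faithful_of_induced_faithful {S M : Type*} [Semigroup S]
    (act : M → S → M) (hact : ∀ (m : M) (s t : S), act m (s * t) = act (act m s) t)
    (a : S) (α β : WithOne S) (hβα : β * α = (a : WithOne S))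
    (hfaith : ∀ s t : S, (∀ m : M, act m (sand α β s) = act m (sand α β t)) → s = t) :
    ∀ s t : S, (∀ m : M, act m s = act m t) → s = t :=
  faithful_of_induced_faithful_general act hact α β hfaith
end

section
/- Let (S,M) be a representation of a semigroup S on a set M, a ∈ S, and α,β ∈ S¹ with βα = a. The induced representation (S_a, M; α, β) is faithful if and only if (S,M) is faithful, α is left cancellable, and β is right cancellable. -/
/-!
The pairs `(s, t)` with `m · s = m · t` for all `m` form a congruence on `S`, which the sandwich
map `s ↦ α s β` therefore preserves. Hence the induced action is faithful iff `(S, M)` is faithful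
and `s ↦ α s β` is injective; the latter splits into cancellability of `α` and `β`, because
`α s` already lies in `S` when `α ≠ 1`.
-/

section Sandwich

variable {S : Type*} [Semigroup S]

theorem sand_eq_sand_iff (α β : WithOne S) (s t : S) :
    sand α β s = sand α β t ↔ α * ↑s * β = α * ↑t * β := by
  rw [← WithOne.coe_inj, sand, sand, sand3_spec, sand3_spec]

@[simp] theorem sand_one_one (s : S) : sand 1 1 s = s :=
  WithOne.coe_injective (by simp [sand, sand3_spec])

@[simp] theorem sand_one_coe (b s : S) : sand 1 (b : WithOne S) s = s * b :=
  WithOne.coe_injective (by simp [sand, sand3_spec])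

@[simp] theorem sand_coe_one (a s : S) : sand (a : WithOne S) 1 s = a * s :=
  WithOne.coe_injective (by simp [sand, sand3_spec])

@[simp] theorem sand_coe_coe (a b s : S) : sand (a : WithOne S) (b : WithOne S) s = a * s * b :=
  WithOne.coe_injective (by simp [sand, sand3_spec])

theorem sand_injective_iff (α β : WithOne S) :
    Function.Injective (sand α β) ↔
      (∀ s t : S, α * ↑s = α * ↑t → s = t) ∧ (∀ s t : S, ↑s * β = ↑t * β → s = t) := by
  refine ⟨fun h => ⟨fun s t hst => h ?_, fun s t hst => h ?_⟩, fun ⟨hα, hβ⟩ s t hst => ?_⟩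
  · rw [sand_eq_sand_iff, hst]
  · rw [sand_eq_sand_iff, mul_assoc, mul_assoc, hst]
  · rw [sand_eq_sand_iff] at hst
    induction α using WithOne.recOneCoe with
    | one => simpa using hβ s t (by simpa using hst)
    | coe u =>
      have hus : u * s = u * t := hβ _ _ (by simpa using hst)
      exact hα s t (by simp [← WithOne.coe_mul, hus])

end Sandwich

section Action

variable {S M : Type*}

def Faithful (act : M → S → M) : Prop :=
  ∀ s t : S, (∀ m : M, act m s = act m t) → s = t

theorem faithful_comp_iff (act : M → S → M) {f : S → S}
    (hf : ∀ s t : S, (∀ m : M, act m s = act m t) → ∀ m : M, act m (f s) = act m (f t)) :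
    Faithful (fun m s => act m (f s)) ↔ Faithful act ∧ Function.Injective f :=
  ⟨fun h => ⟨fun s t hst => h s t (hf s t hst), fun s t hst => h s t (by simp [hst])⟩,
    fun ⟨hfaith, hinj⟩ s t hst => hinj (hfaith _ _ hst)⟩

theorem act_sand_eq_of_act_eq [Semigroup S] {act : M → S → M}
    (hact : ∀ (m : M) (s t : S), act m (s * t) = act (act m s) t) (α β : WithOne S) {s t : S}
    (hst : ∀ m : M, act m s = act m t) (m : M) : act m (sand α β s) = act m (sand α β t) := by
  induction α using WithOne.recOneCoe <;> induction β using WithOne.recOneCoe <;>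
    simp [hact, hst]

end Action

theorem induced_faithful_iff_general {S M : Type*} [Semigroup S]
    (act : M → S → M) (hact : ∀ (m : M) (s t : S), act m (s * t) = act (act m s) t)
    (α β : WithOne S) :
    (∀ s t : S, (∀ m : M, act m (sand α β s) = act m (sand α β t)) → s = t) ↔
      ((∀ s t : S, (∀ m : M, act m s = act m t) → s = t) ∧
        (∀ s t : S, α * ↑s = α * ↑t → s = t) ∧
        (∀ s t : S, ↑s * β = ↑t * β → s = t)) :=
  (faithful_comp_iff act fun _ _ => act_sand_eq_of_act_eq hact α β).trans
    (and_congr_right' (sand_injective_iff α β))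

/-- The induced representation `(S_a, M; α, β)`, `m ∗ s = m · (α s β)`, is faithful iff
`(S, M)` is faithful, `α` is left cancellable and `β` is right cancellable. -/
theorem induced_faithful_iff {S M : Type*} [Semigroup S]
    (act : M → S → M) (hact : ∀ (m : M) (s t : S), act m (s * t) = act (act m s) t)
    (a : S) (α β : WithOne S) (hβα : β * α = (a : WithOne S)) :
    (∀ s t : S, (∀ m : M, act m (sand α β s) = act m (sand α β t)) → s = t) ↔
      ((∀ s t : S, (∀ m : M, act m s = act m t) → s = t) ∧
        (∀ s t : S, α * ↑s = α * ↑t → s = t) ∧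
        (∀ s t : S, ↑s * β = ↑t * β → s = t)) :=
  induced_faithful_iff_general act hact α β
end

section
/- Let S be a regular semigroup, a = βα ∈ S with α, β ∈ S¹, and suppose there exist inverses α* of α and β* of β in S¹ such that β*βαα* is a mididentity in S. If ∗: M × S_a → M is a faithful representation of S_a, and α is left cancellable and β is right cancellable, then the map m · s = m ∗ (α* s β*) defines a representation of S on M such that m · (αsβ) = m ∗ s for all m ∈ M, s ∈ S. -/
/-! Writing `σ s = α* s β*`, the mididentity `β*βαα* = β* a α*` gives
`σ (s t) = σ s · β* a α* · σ t = σ s ∗ σ t`, so `σ` is a homomorphism into the variant `S_a`;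
and `α σ(α s β) β = (αα*α) s (ββ*β) = α s β`, so cancelling `α` and `β` gives `σ (α s β) = s`. -/

section Sandwich

variable {S : Type*} [Semigroup S]

theorem coe_sand (b c : WithOne S) (s : S) : (↑(sand b c s) : WithOne S) = b * ↑s * c :=
  sand3_spec b s c

theorem sand_mul_of_mididentity {b c : WithOne S} {w : S}
    (hmid : ∀ s t : S, (↑s : WithOne S) * (c * ↑w * b) * ↑t = ↑(s * t)) (s t : S) :
    sand b c (s * t) = sand b c s * w * sand b c t := by
  apply WithOne.coe_injective
  rw [coe_sand, ← hmid s t, WithOne.coe_mul, WithOne.coe_mul, coe_sand, coe_sand]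
  simp only [mul_assoc]

theorem eq_of_mul_mul_eq_mul_mul {α β : WithOne S}
    (hlc : ∀ s t : S, α * ↑s = α * ↑t → s = t) (hrc : ∀ s t : S, ↑s * β = ↑t * β → s = t)
    {s t : S} (h : α * ↑s * β = α * ↑t * β) : s = t := by
  apply hrc
  -- `↑x * β` is again an element of `S`, so left cancellation by `α` applies to it.
  have hsβ : ∀ x : S, (↑(sand 1 β x) : WithOne S) = ↑x * β := fun x => by
    rw [coe_sand, one_mul]
  have hcancel := hlc (sand 1 β s) (sand 1 β t) (by rw [hsβ, hsβ, ← mul_assoc, ← mul_assoc, h])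
  rw [← hsβ, ← hsβ, hcancel]

theorem sand_sand_eq_self {α β α' β' : WithOne S}
    (hα : α * α' * α = α) (hβ : β * β' * β = β)
    (hlc : ∀ s t : S, α * ↑s = α * ↑t → s = t) (hrc : ∀ s t : S, ↑s * β = ↑t * β → s = t)
    (s : S) : sand α' β' (sand α β s) = s := by
  apply eq_of_mul_mul_eq_mul_mul hlc hrc
  calc α * ↑(sand α' β' (sand α β s)) * β = (α * α' * α) * ↑s * (β * β' * β) := by
        simp only [coe_sand, mul_assoc]
    _ = α * ↑s * β := by rw [hα, hβ]

end Sandwich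

theorem induced_from_variant_representation_general {S M : Type*} [Semigroup S]
    (a : S) (α β α' β' : WithOne S) (hβα : β * α = (a : WithOne S))
    (hα' : α * α' * α = α ∧ α' * α * α' = α')
    (hβ' : β * β' * β = β ∧ β' * β * β' = β')
    (hmid : ∀ s t : S, (↑s : WithOne S) * (β' * β * α * α') * ↑t = (↑(s * t) : WithOne S))
    (star : M → S → M)
    (hstar : ∀ (m : M) (s t : S), star m (s * a * t) = star (star m s) t)
    (hlc : ∀ s t : S, α * ↑s = α * ↑t → s = t)
    (hrc : ∀ s t : S, ↑s * β = ↑t * β → s = t) :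
    (∀ (m : M) (s t : S),
        star m (sand α' β' (s * t)) = star (star m (sand α' β' s)) (sand α' β' t)) ∧
      (∀ (m : M) (s : S), star m (sand α' β' (sand α β s)) = star m s) := by
  have hmid' : ∀ s t : S, (↑s : WithOne S) * (β' * ↑a * α') * ↑t = ↑(s * t) := by
    simpa only [← hβα, mul_assoc] using hmid
  refine ⟨fun m s t => ?_, fun m s => ?_⟩
  · rw [sand_mul_of_mididentity hmid', hstar]
  · rw [sand_sand_eq_self hα'.1 hβ'.1 hlc hrc]

/-- Theorem 2 (2 ⟹ 1): let `S` be regular, `a = βα`, with `α*, β*` inverses of `α, β` in `S¹`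
such that `β*βαα*` is a mididentity in `S`. If `∗ : M × S_a → M` is a faithful representation
of the variant `S_a` and `α, β` are left/right cancellable, then `m · s := m ∗ (α* s β*)`
defines a representation of `S` on `M` with `m · (α s β) = m ∗ s`. -/
theorem induced_from_variant_representation {S M : Type*} [Semigroup S]
    (hreg : ∀ x : S, ∃ y : S, x * y * x = x ∧ y * x * y = y)
    (a : S) (α β α' β' : WithOne S) (hβα : β * α = (a : WithOne S))
    (hα' : α * α' * α = α ∧ α' * α * α' = α')
    (hβ' : β * β' * β = β ∧ β' * β * β' = β')
    (hmid : ∀ s t : S, (↑s : WithOne S) * (β' * β * α * α') * ↑t = (↑(s * t) : WithOne S))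
    (star : M → S → M)
    (hstar : ∀ (m : M) (s t : S), star m (s * a * t) = star (star m s) t)
    (hfaith : ∀ s t : S, (∀ m : M, star m s = star m t) → s = t)
    (hlc : ∀ s t : S, α * ↑s = α * ↑t → s = t)
    (hrc : ∀ s t : S, ↑s * β = ↑t * β → s = t) :
    (∀ (m : M) (s t : S),
        star m (sand α' β' (s * t)) = star (star m (sand α' β' s)) (sand α' β' t)) ∧
      (∀ (m : M) (s : S), star m (sand α' β' (sand α β s)) = star m s) :=
  induced_from_variant_representation_general a α β α' β' hβα hα' hβ' hmid star hstar hlc hrc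
end

section
/- In the bicyclic semigroup B = ⟨a,b | ba = 1⟩ with its Cayley representation m ∗ s = ms, there is no representation ∘: B × B → B of B such that m ∘ (asb) = ms for all m, s ∈ B. -/
/-- The bicyclic monoid `B = ⟨a,b | ba = 1⟩`, realized on `ℕ × ℕ`, where `(m,n)` stands for the
normal form `aᵐbⁿ`; here `a = (1,0)`, `b = (0,1)`, `1 = (0,0)`, and `ba = 1`, `ab = (1,1) ≠ 1`. -/
def bmul : ℕ × ℕ → ℕ × ℕ → ℕ × ℕ :=
  fun x y => (x.1 + (y.1 - x.2), y.2 + (x.2 - y.1))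

/-- In the bicyclic semigroup `B = ⟨a,b | ba = 1⟩` with its Cayley representation `m ∗ s = ms`,
there is no representation `∘ : B × B → B` of `B` such that `m ∘ (a s b) = m s` for all `m, s`. -/
theorem bicyclic_no_induced_representation :
    ¬ ∃ circ : ℕ × ℕ → ℕ × ℕ → ℕ × ℕ,
        (∀ m s t : ℕ × ℕ, circ m (bmul s t) = circ (circ m s) t) ∧
        (∀ m s : ℕ × ℕ, circ m (bmul (bmul (1, 0) s) (0, 1)) = bmul m s) := by
  rintro ⟨c, h1, h2⟩
  -- A : c m (1,1) = m
  have hA : ∀ m : ℕ × ℕ, c m (1, 1) = m := by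
    intro m
    have := h2 m (0, 0)
    simpa [bmul] using this
  -- C : c (c m (1,0)) (0,1) = m
  have hC : ∀ m : ℕ × ℕ, c (c m (1, 0)) (0, 1) = m := by
    intro m
    have := h1 m (1, 0) (0, 1)
    simp only [show bmul (1, 0) (0, 1) = (1, 1) by simp [bmul]] at this
    rw [hA] at this
    exact this.symm
  -- c (1,0) (2,1) = (2,0)
  have hK : c (1, 0) (2, 1) = (2, 0) := by
    have := h2 (1, 0) (1, 0)
    simpa [bmul] using this
  -- D : c (1,0) (1,0) = (2,0)
  have hD : c (1, 0) (1, 0) = (2, 0) := by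
    have := h1 (c (1, 0) (1, 0)) (0, 1) (2, 1)
    simp only [show bmul (0, 1) (2, 1) = (1, 1) by simp [bmul]] at this
    rw [hA, hC (1, 0), hK] at this
    exact this
  -- c (2,0) (1,2) = (2,1)
  have hL : c (2, 0) (1, 2) = (2, 1) := by
    have := h2 (2, 0) (0, 1)
    simpa [bmul] using this
  -- E : c (2,1) (1,0) = (2,0)
  have hE : c (2, 1) (1, 0) = (2, 0) := by
    have := h1 (2, 0) (1, 2) (1, 0)
    simp only [show bmul (1, 2) (1, 0) = (1, 1) by simp [bmul]] at this
    rw [hA, hL] at this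
    exact this.symm
  -- F : c (2,0) (0,1) = (2,1)
  have hF : c (2, 0) (0, 1) = (2, 1) := by
    have := hC (2, 1)
    rwa [hE] at this
  -- G : c (2,0) (0,1) = (1,0)
  have hG : c (2, 0) (0, 1) = (1, 0) := by
    have := hC (1, 0)
    rwa [hD] at this
  rw [hF] at hG
  exact absurd hG (by decide)
end

section
/- Let S be a regular semigroup with set of idempotents E. If every idempotent e ∈ E is either a left identity or a right identity for S, then S is either a left group or a right group. -/
/-- Let `S` be a regular semigroup in which every idempotent is a left identity or a right
identity. Then `S` is a left group (right simple and left cancellative) or a right group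
(left simple and right cancellative). -/
theorem regular_idempotents_identities_left_or_right_group {S : Type*} [Semigroup S]
    (hreg : ∀ x : S, ∃ y : S, x * y * x = x ∧ y * x * y = y)
    (hE : ∀ e : S, e * e = e → (∀ s : S, e * s = s) ∨ (∀ s : S, s * e = s)) :
    ((∀ s t : S, ∃ x : S, s * x = t) ∧ (∀ a b c : S, a * b = a * c → b = c)) ∨
      ((∀ s t : S, ∃ x : S, x * s = t) ∧ (∀ a b c : S, b * a = c * a → b = c)) := by
  by_cases h : ∀ e : S, e * e = e → ∀ s : S, e * s = s
  · left
    constructor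
    · intro s t
      obtain ⟨y, h1, h2⟩ := hreg s
      refine ⟨y * t, ?_⟩
      have he : (s * y) * (s * y) = s * y := by
        have : s * y * (s * y) = (s * y * s) * y := by simp [mul_assoc]
        rw [this, h1]
      calc s * (y * t) = (s * y) * t := by rw [mul_assoc]
        _ = t := h _ he t
    · intro a b c hbc
      obtain ⟨y, h1, h2⟩ := hreg a
      have he : (y * a) * (y * a) = y * a := by
        have : y * a * (y * a) = y * (a * y * a) := by simp [mul_assoc]
        rw [this, h1]
      have hl := h _ he
      calc b = y * a * b := (hl b).symm
        _ = y * (a * c) := by rw [mul_assoc, hbc]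
        _ = c := by rw [← mul_assoc]; exact hl c
  · right
    push_neg at h
    obtain ⟨f, hf, hnl⟩ := h
    have hfr : ∀ s : S, s * f = s := (hE f hf).resolve_left (by
      intro hl; obtain ⟨s, hs⟩ := hnl; exact hs (hl s))
    have hr : ∀ e : S, e * e = e → ∀ s : S, s * e = s := by
      intro e he
      rcases hE e he with hl | hrr
      · have hef : e = f := (hfr e).symm.trans (hl f)
        rw [hef]; exact hfr
      · exact hrr
    constructor
    · intro s t
      obtain ⟨y, h1, h2⟩ := hreg s
      refine ⟨t * y, ?_⟩
      have he : (y * s) * (y * s) = y * s := by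
        have : y * s * (y * s) = y * (s * y * s) := by simp [mul_assoc]
        rw [this, h1]
      calc (t * y) * s = t * (y * s) := by rw [mul_assoc]
        _ = t := hr _ he t
    · intro a b c hbc
      obtain ⟨y, h1, h2⟩ := hreg a
      have he : (a * y) * (a * y) = a * y := by
        have : a * y * (a * y) = (a * y * a) * y := by simp [mul_assoc]
        rw [this, h1]
      have hrr := hr _ he
      calc b = b * (a * y) := (hrr b).symm
        _ = c * a * y := by rw [← mul_assoc, hbc]
        _ = c := by rw [mul_assoc]; exact hrr c
end

section
/- Let S = G × U be the direct product of a group G and a left zero semigroup U (a left group). Then for every (g,u) ∈ S and every representation ∗: M × S_{(g,u)} → M of the variant S_{(g,u)}, the map m · (h,v) = m ∗ (hg^{-1}, v) is a representation of S on M satisfying m · ((h,v)(g,u)) = m ∗ (h,v) for all (h,v) ∈ S, m ∈ M. -/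
/-- Let `S = G × U` be a left group, the direct product of a group `G` and a left zero
semigroup `U`. For every `(g,u) ∈ S` and every representation `∗` of the variant `S_{(g,u)}`
(with multiplication `x ∗ y = x (g,u) y`), the map `m · (h,v) := m ∗ (h g⁻¹, v)` is a
representation of `S` on `M` satisfying `m · ((h,v)(g,u)) = m ∗ (h,v)`. -/
theorem left_group_variant_representation_induced {G U M : Type*} [Group G] [Semigroup U]
    (hU : ∀ u v : U, u * v = u) (g : G) (u : U)
    (star : M → G × U → M)
    (hstar : ∀ (m : M) (x y : G × U), star m (x * (g, u) * y) = star (star m x) y) :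
    (∀ (m : M) (x y : G × U),
        star m (((x * y).1 * g⁻¹, (x * y).2)) =
          star (star m ((x.1 * g⁻¹, x.2))) ((y.1 * g⁻¹, y.2))) ∧
      (∀ (m : M) (x : G × U),
        star m (((x * (g, u)).1 * g⁻¹, (x * (g, u)).2)) = star m x) := by
  constructor
  · intro m x y
    have h := hstar m (x.1 * g⁻¹, x.2) (y.1 * g⁻¹, y.2)
    have heq : ((x.1 * g⁻¹, x.2) : G × U) * (g, u) * (y.1 * g⁻¹, y.2) =
        ((x * y).1 * g⁻¹, (x * y).2) := by
      ext <;> simp [hU, mul_assoc]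
    rw [heq] at h
    exact h
  · intro m x
    have heq : (((x * (g, u)).1 * g⁻¹, (x * (g, u)).2) : G × U) = x := by
      ext <;> simp [hU]
    rw [heq]
end

section
/- Let S be a semigroup, a ∈ S with a = βα, α,β ∈ S¹, and let (S,M) be a representation. The induced representation (S_a, M; α, β) (given by m ∗ s = m·(αsβ)) is cyclic if and only if (S,M) is cyclic, M·β = M, and M·α contains a generating element for (S,M). -/
/-- The canonical extension of a map `M → S → M` to `S¹ = WithOne S` (with `1` acting as the
identity map), used to express `M · α` for `α ∈ S¹`. -/
def actW {S M : Type*} [Semigroup S] (act : M → S → M) (m : M) : WithOne S → M :=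
  WithOne.recOneCoe m (act m)

/-!
The induced action factors as `m ∗ s = ((m · α) · s) · β`, so `m` generates the induced
representation iff `s ↦ ((m · α) · s) · β` maps `S` onto `M`. This forces `M · β = M` and, since
`s β ∈ S`, makes `m · α` a generator of `(S, M)`; conversely a generator `m · α` followed by the
surjection `· β` reaches all of `M`.
-/

open Function

section

variable {S M : Type*} [Semigroup S] (act : M → S → M)

@[simp]
theorem actW_coe (m : M) (s : S) : actW act m (s : WithOne S) = act m s := rfl

@[simp]
theorem actW_one (m : M) : actW act m (1 : WithOne S) = m := rfl

theorem actW_mul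
    (hact : ∀ (m : M) (s t : S), act m (s * t) = act (act m s) t) (m : M)
    (x y : WithOne S) : actW act m (x * y) = actW act (actW act m x) y := by
  induction x using WithOne.recOneCoe with
  | one => rw [one_mul, actW_one]
  | coe a => induction y using WithOne.recOneCoe with
    | one => rw [mul_one, actW_one]
    | coe b => rw [← WithOne.coe_mul, actW_coe, actW_coe, actW_coe, hact]

theorem act_comp_sand
    (hact : ∀ (m : M) (s t : S), act m (s * t) = act (act m s) t) (m : M) (α β : WithOne S) :
    act m ∘ sand α β = (actW act · β) ∘ act (actW act m α) := by
  funext s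
  rw [comp_apply, ← actW_coe act m, sand, sand3_spec, actW_mul act hact, actW_mul act hact,
    actW_coe, comp_apply]

theorem surjective_act_comp_sand_iff
    (hact : ∀ (m : M) (s t : S), act m (s * t) = act (act m s) t) (m : M) (α β : WithOne S) :
    Surjective (act m ∘ sand α β) ↔
      Surjective (actW act · β) ∧ Surjective (act (actW act m α)) := by
  rw [act_comp_sand act hact]
  refine ⟨fun h => ⟨h.of_comp, ?_⟩, fun ⟨hβ, hα⟩ => hβ.comp hα⟩
  -- `s ↦ s β` stays inside `S`, so the images `(m · α) · (s β)` already cover `M`.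
  have hsβ : act (actW act m α) ∘ sand 1 β = (actW act · β) ∘ act (actW act m α) := by
    rw [act_comp_sand act hact, actW_one]
  exact (hsβ ▸ h).of_comp

end

theorem induced_cyclic_iff_general {S M : Type*} [Semigroup S]
    (act : M → S → M) (hact : ∀ (m : M) (s t : S), act m (s * t) = act (act m s) t)
    (α β : WithOne S) :
    (∃ m : M, ∀ m₁ : M, ∃ s : S, act m (sand α β s) = m₁) ↔
      ((∃ m : M, ∀ m₁ : M, ∃ s : S, act m s = m₁) ∧
        (∀ m₁ : M, ∃ m : M, actW act m β = m₁) ∧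
        (∃ m₀ : M, (∃ m : M, actW act m α = m₀) ∧ ∀ m₁ : M, ∃ s : S, act m₀ s = m₁)) := by
  constructor
  · rintro ⟨m, hm⟩
    obtain ⟨hβ, hα⟩ := (surjective_act_comp_sand_iff act hact m α β).1 hm
    exact ⟨⟨_, hα⟩, hβ, _, ⟨m, rfl⟩, hα⟩
  · rintro ⟨-, hβ, _, ⟨m, rfl⟩, hα⟩
    exact ⟨m, (surjective_act_comp_sand_iff act hact m α β).2 ⟨hβ, hα⟩⟩

/-- The induced representation `(S_a, M; α, β)` (given by `m ∗ s = m · (α s β)`) is cyclic iff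
`(S, M)` is cyclic, `M · β = M`, and `M · α` contains a generating element for `(S, M)`. -/
theorem induced_cyclic_iff {S M : Type*} [Semigroup S]
    (act : M → S → M) (hact : ∀ (m : M) (s t : S), act m (s * t) = act (act m s) t)
    (a : S) (α β : WithOne S) (hβα : β * α = (a : WithOne S)) :
    (∃ m : M, ∀ m₁ : M, ∃ s : S, act m (sand α β s) = m₁) ↔
      ((∃ m : M, ∀ m₁ : M, ∃ s : S, act m s = m₁) ∧
        (∀ m₁ : M, ∃ m : M, actW act m β = m₁) ∧
        (∃ m₀ : M, (∃ m : M, actW act m α = m₀) ∧ ∀ m₁ : M, ∃ s : S, act m₀ s = m₁)) :=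
  induced_cyclic_iff_general act hact α β
end

section
/- Let S be a semigroup, b, c ∈ S¹, ρ a congruence on S. Then S_{cb}/ρ_{b,c} is isomorphic to bSc / (ρ ∩ (bSc × bSc)), via the map sending the ρ_{b,c}-class of x to the class of bxc. -/
/-- The subsemigroup `bSc = {bsc : s ∈ S}` of `S`. -/
def BSC {S : Type*} [Semigroup S] (b c : WithOne S) : Type _ :=
  {z : S // ∃ s : S, z = sand b c s}

/-- Multiplication on `bSc` (it is closed under the multiplication of `S`). -/
noncomputable def bscMul {S : Type*} [Semigroup S] {b c : WithOne S} (x y : BSC b c) :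
    BSC b c :=
  ⟨x.1 * y.1, by
    obtain ⟨s, hs⟩ := x.2
    obtain ⟨t, ht⟩ := y.2
    refine ⟨sand3 (↑s * c * b) t 1, ?_⟩
    have : ((x.1 * y.1 : S) : WithOne S) = ↑(sand b c (sand3 (↑s * c * b) t 1)) := by
      rw [hs, ht]
      simp only [sand, WithOne.coe_mul, sand3_spec, mul_one, mul_assoc]
    exact_mod_cast this⟩

/-- Reflexivity of `r` is what makes the inverse independent of the chosen preimages. -/
noncomputable def Quot.comapEquivOfSurjective {α β : Type*} {f : α → β}
    (hf : Function.Surjective f) {r : β → β → Prop} (hr : ∀ y, r y y) :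
    Quot (fun a a' => r (f a) (f a')) ≃ Quot r where
  toFun := Quot.map f fun _ _ h => h
  invFun := Quot.lift (fun y => Quot.mk _ (Function.surjInv hf y)) fun y y' h =>
    Quot.sound <| by
      simp only [Function.surjInv_eq hf]
      exact h
  left_inv := by
    rintro ⟨x⟩
    refine Quot.sound ?_
    simp only [Function.surjInv_eq hf]
    exact hr _
  right_inv := by
    rintro ⟨y⟩
    exact congrArg (Quot.mk r) (Function.surjInv_eq hf y)

section Sandwich

variable {S : Type*} [Semigroup S] (b c : WithOne S)

noncomputable def BSC.mk (s : S) : BSC b c :=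
  ⟨sand b c s, s, rfl⟩

theorem BSC.mk_surjective : Function.Surjective (BSC.mk b c) := by
  rintro ⟨_, s, rfl⟩
  exact ⟨s, rfl⟩

/-- `sand3 (↑s * (c * b)) t 1` is the variant product `s (cb) t`, taken in `S`. -/
theorem sand_variant_mul (s t : S) :
    sand b c (sand3 (↑s * (c * b)) t 1) = sand b c s * sand b c t :=
  WithOne.coe_injective <| by
    simp only [sand, WithOne.coe_mul, sand3_spec, mul_one, mul_assoc]

theorem BSC.mk_variant_mul (s t : S) :
    BSC.mk b c (sand3 (↑s * (c * b)) t 1) = bscMul (BSC.mk b c s) (BSC.mk b c t) :=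
  Subtype.ext (sand_variant_mul b c s t)

end Sandwich

theorem variant_quotient_iso_general {S : Type*} [Semigroup S]
    (b c : WithOne S) (ρ : S → S → Prop) (hequiv : Equivalence ρ) :
    ∃ e : Quot (fun s t : S => ρ (sand b c s) (sand b c t)) ≃
        Quot (fun x y : BSC b c => ρ x.1 y.1),
      (∀ s : S, e (Quot.mk _ s) = Quot.mk _ ⟨sand b c s, s, rfl⟩) ∧
      (∀ s t : S, e (Quot.mk _ (sand3 (↑s * (c * b)) t 1)) =
          Quot.mk _ (bscMul ⟨sand b c s, s, rfl⟩ ⟨sand b c t, t, rfl⟩)) := by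
  refine ⟨Quot.comapEquivOfSurjective (r := fun x y : BSC b c => ρ x.1 y.1)
    (BSC.mk_surjective b c) fun x => hequiv.refl x.1, fun _ => rfl, fun s t => ?_⟩
  exact congrArg (Quot.mk _) (BSC.mk_variant_mul b c s t)

/-- `S_{cb}/ρ_{b,c}` is isomorphic to `bSc / (ρ ∩ (bSc × bSc))`, via the map sending the
`ρ_{b,c}`-class of `x` to the class of `bxc`; the map is multiplicative from the variant
multiplication `s ∗ t = s (cb) t` to the multiplication of `bSc`. -/
theorem variant_quotient_iso {S : Type*} [Semigroup S]
    (b c : WithOne S) (ρ : S → S → Prop) (hequiv : Equivalence ρ)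
    (hcomp : ∀ s t u v : S, ρ s t → ρ u v → ρ (s * u) (t * v)) :
    ∃ e : Quot (fun s t : S => ρ (sand b c s) (sand b c t)) ≃
        Quot (fun x y : BSC b c => ρ x.1 y.1),
      (∀ s : S, e (Quot.mk _ s) = Quot.mk _ ⟨sand b c s, s, rfl⟩) ∧
      (∀ s t : S, e (Quot.mk _ (sand3 (↑s * (c * b)) t 1)) =
          Quot.mk _ (bscMul ⟨sand b c s, s, rfl⟩ ⟨sand b c t, t, rfl⟩)) :=
  variant_quotient_iso_general b c ρ hequiv
end

section
/- Let S be a semigroup, b,c,b₁,c₁ ∈ S¹, ρ a congruence on S. If bρ and b₁ρ are L-related and cρ and c₁ρ are R-related in (S/ρ)¹, then ρ_{b,c} = ρ_{b₁,c₁}. -/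
/-- The relation induced by `ρ` on `S¹ = WithOne S` (classes of the quotient `(S/ρ)¹`
coincide iff this relation holds). -/
def rhoOne {S : Type*} [Semigroup S] (ρ : S → S → Prop) :
    WithOne S → WithOne S → Prop := fun x y =>
  (x = 1 ∧ y = 1) ∨ ∃ s t : S, x = ↑s ∧ y = ↑t ∧ ρ s t

theorem MonoidHom.map_mul_mul_eq_of_map_mul_eq {M N : Type*} [Monoid M] [Monoid N] (φ : M →* N)
    {b c b₁ c₁ u v x y : M} (hb : φ (v * b) = φ b₁) (hc : φ (c * u) = φ c₁)
    (h : φ (b * x * c) = φ (b * y * c)) : φ (b₁ * x * c₁) = φ (b₁ * y * c₁) := by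
  calc φ (b₁ * x * c₁) = φ v * φ (b * x * c) * φ u := by
        simp only [← hb, ← hc, map_mul, mul_assoc]
    _ = φ (b₁ * y * c₁) := by
        rw [h]; simp only [← hb, ← hc, map_mul, mul_assoc]

section

variable {S : Type*} [Semigroup S]

def Con.mkWithOne (κ : Con S) : WithOne S →* WithOne κ.Quotient :=
  WithOne.mapMulHom κ.mkMulHom

theorem Con.rhoOne_iff_mkWithOne_eq (κ : Con S) {x y : WithOne S} :
    rhoOne κ x y ↔ κ.mkWithOne x = κ.mkWithOne y := by
  induction x using WithOne.recOneCoe <;> induction y using WithOne.recOneCoe <;>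
    simp [rhoOne, Con.mkWithOne, Con.eq]

theorem Con.sand_rel_iff (κ : Con S) (b c : WithOne S) (s t : S) :
    κ (sand b c s) (sand b c t) ↔ κ.mkWithOne (b * s * c) = κ.mkWithOne (b * t * c) := by
  simp [sand, ← sand3_spec, Con.mkWithOne, Con.eq]

theorem Con.sand_rel_of_rhoOne (κ : Con S) {b c b₁ c₁ u v : WithOne S}
    (hb : rhoOne κ (v * b) b₁) (hc : rhoOne κ (c * u) c₁) {s t : S}
    (h : κ (sand b c s) (sand b c t)) : κ (sand b₁ c₁ s) (sand b₁ c₁ t) := by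
  rw [Con.rhoOne_iff_mkWithOne_eq] at hb hc
  rw [Con.sand_rel_iff] at h ⊢
  exact κ.mkWithOne.map_mul_mul_eq_of_map_mul_eq hb hc h

end

/-- If `bρ` and `b₁ρ` are `L`-related and `cρ`, `c₁ρ` are `R`-related in `(S/ρ)¹`, then
`ρ_{b,c} = ρ_{b₁,c₁}`. -/
theorem rho_bc_eq_of_green {S : Type*} [Semigroup S]
    (b c b₁ c₁ : WithOne S) (ρ : S → S → Prop) (hequiv : Equivalence ρ)
    (hcomp : ∀ s t u v : S, ρ s t → ρ u v → ρ (s * u) (t * v))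
    (hL : (∃ u : WithOne S, rhoOne ρ (u * b₁) b) ∧ (∃ v : WithOne S, rhoOne ρ (v * b) b₁))
    (hR : (∃ u : WithOne S, rhoOne ρ (c * u) c₁) ∧ (∃ v : WithOne S, rhoOne ρ (c₁ * v) c)) :
    ∀ s t : S, ρ (sand b c s) (sand b c t) ↔ ρ (sand b₁ c₁ s) (sand b₁ c₁ t) := by
  let κ : Con S := ⟨⟨ρ, hequiv⟩, hcomp _ _ _ _⟩
  obtain ⟨⟨u, hu⟩, ⟨v, hv⟩⟩ := hL
  obtain ⟨⟨u₁, hu₁⟩, ⟨v₁, hv₁⟩⟩ := hR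
  exact fun s t => ⟨κ.sand_rel_of_rhoOne hv hu₁, κ.sand_rel_of_rhoOne hu hv₁⟩
end

section
/- Let S be a semigroup, b,c ∈ S¹ with b and c regular in S¹, and ρ, σ congruences on S. Then (ρ ∨ σ)_{b,c} = ρ_{b,c} ∨ σ_{b,c}. -/
/-- The join of two congruences: the transitive closure of their union. -/
def joinRel {S : Type*} (ρ σ : S → S → Prop) : S → S → Prop :=
  Relation.TransGen (fun x y => ρ x y ∨ σ x y)


section Sandwich

variable {S : Type*} [Semigroup S]

theorem sand3_eq_iff {x y : WithOne S} {u z : S} :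
    sand3 x u y = z ↔ x * ↑u * y = (z : WithOne S) := by
  rw [← WithOne.coe_inj, sand3_spec]

@[simp]
theorem sand3_one_one (u : S) : sand3 1 u 1 = u := by
  simp [sand3_eq_iff]

@[simp]
theorem sand3_one_coe (u d : S) : sand3 1 u d = u * d := by
  simp [sand3_eq_iff]

@[simp]
theorem sand3_coe_one (a u : S) : sand3 a u 1 = a * u := by
  simp [sand3_eq_iff]

@[simp]
theorem sand3_coe_coe (a u d : S) : sand3 a u d = a * u * d := by
  simp [sand3_eq_iff]

theorem sand3_sand3 (x y z w : WithOne S) (u : S) :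
    sand3 x (sand3 y u z) w = sand3 (x * y) u (z * w) := by
  rw [sand3_eq_iff, sand3_spec, sand3_spec]
  simp only [mul_assoc]

theorem sand3_rel_sand3 {r : S → S → Prop} (hrefl : ∀ s, r s s)
    (hmul : ∀ s t u v : S, r s t → r u v → r (s * u) (t * v))
    (x y : WithOne S) {u v : S} (h : r u v) : r (sand3 x u y) (sand3 x v y) := by
  induction x using WithOne.recOneCoe with
  | one =>
    induction y using WithOne.recOneCoe with
    | one => simpa using h
    | coe d => simpa using hmul _ _ _ _ h (hrefl d)
  | coe a =>
    induction y using WithOne.recOneCoe with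
    | one => simpa using hmul _ _ _ _ (hrefl a) h
    | coe d => simpa using hmul _ _ _ _ (hmul _ _ _ _ (hrefl a) h) (hrefl d)

/-- The relation `τ_{b,c}` on the variant `S_{cb}`. -/
def sandRel (b c : WithOne S) (τ : S → S → Prop) : S → S → Prop :=
  fun x y => τ (sand b c x) (sand b c y)

theorem joinRel_sand_of_joinRel_sandRel {b c : WithOne S} {ρ σ : S → S → Prop} {s t : S}
    (h : joinRel (sandRel b c ρ) (sandRel b c σ) s t) : joinRel ρ σ (sand b c s) (sand b c t) :=
  Relation.TransGen.lift (sand b c) (fun _ _ h => h) _ _ h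

theorem sandRel_sand3 {r : S → S → Prop} (hrefl : ∀ s, r s s)
    (hmul : ∀ s t u v : S, r s t → r u v → r (s * u) (t * v))
    (b c b' c' : WithOne S) {u v : S} (h : r u v) :
    sandRel b c r (sand3 b' u c') (sand3 b' v c') := by
  simp only [sandRel, sand, sand3_sand3]
  exact sand3_rel_sand3 hrefl hmul _ _ h

theorem sand_sand3_sand_of_regular {b c b' c' : WithOne S} (hb : b * b' * b = b)
    (hc : c * c' * c = c) (u : S) : sand b c (sand3 b' (sand b c u) c') = sand b c u := by
  simp only [sand, sand3_sand3]
  rw [← mul_assoc, hb, hc]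

theorem joinRel_sandRel_of_joinRel_sand {b c b' c' : WithOne S} (hb : b * b' * b = b)
    (hc : c * c' * c = c) {ρ σ : S → S → Prop} (hρrefl : ∀ s, ρ s s)
    (hρmul : ∀ s t u v : S, ρ s t → ρ u v → ρ (s * u) (t * v)) (hσrefl : ∀ s, σ s s)
    (hσmul : ∀ s t u v : S, σ s t → σ u v → σ (s * u) (t * v)) {s t : S}
    (h : joinRel ρ σ (sand b c s) (sand b c t)) :
    joinRel (sandRel b c ρ) (sandRel b c σ) s t := by
  have hchain : joinRel (sandRel b c ρ) (sandRel b c σ)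
      (sand3 b' (sand b c s) c') (sand3 b' (sand b c t) c') :=
    Relation.TransGen.lift (fun u => sand3 b' u c')
      (fun _ _ => Or.imp (sandRel_sand3 hρrefl hρmul b c b' c')
        (sandRel_sand3 hσrefl hσmul b c b' c')) _ _ h
  have hfix := sand_sand3_sand_of_regular hb hc
  refine .head (Or.inl ?_) (hchain.tail (Or.inl ?_))
  · simp only [sandRel, hfix, hρrefl]
  · simp only [sandRel, hfix, hρrefl]

end Sandwich

/-- If `b` and `c` are regular in `S¹`, then `(ρ ∨ σ)_{b,c} = ρ_{b,c} ∨ σ_{b,c}` for all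
congruences `ρ, σ` on `S`. -/
theorem rho_bc_join_eq_of_regular {S : Type*} [Semigroup S]
    (b c : WithOne S)
    (hb : ∃ b' : WithOne S, b * b' * b = b)
    (hc : ∃ c' : WithOne S, c * c' * c = c)
    (ρ σ : S → S → Prop)
    (hρequiv : Equivalence ρ)
    (hρcomp : ∀ s t u v : S, ρ s t → ρ u v → ρ (s * u) (t * v))
    (hσequiv : Equivalence σ)
    (hσcomp : ∀ s t u v : S, σ s t → σ u v → σ (s * u) (t * v)) :
    ∀ s t : S,
      joinRel ρ σ (sand b c s) (sand b c t) ↔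
        joinRel (fun x y : S => ρ (sand b c x) (sand b c y))
          (fun x y : S => σ (sand b c x) (sand b c y)) s t := by
  intro s t
  obtain ⟨b', hb⟩ := hb
  obtain ⟨c', hc⟩ := hc
  exact ⟨joinRel_sandRel_of_joinRel_sand hb hc hρequiv.refl hρcomp hσequiv.refl hσcomp,
    joinRel_sand_of_joinRel_sandRel⟩
end

section
/- Let S be a semigroup, b,c ∈ S¹ with bSc = S. Then the map ρ ↦ ρ_{b,c} is an injective lattice homomorphism from the congruence lattice of S to the congruence lattice of the variant S_{cb}; in particular ρ_{b,c} = σ_{b,c} implies ρ = σ, and (ρ ∨ σ)_{b,c} = ρ_{b,c} ∨ σ_{b,c}. -/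
/-! The whole theorem is about pulling relations back along the map `s ↦ bsc`, which `bSc = S`
makes surjective. Pulling back along a surjection is injective and commutes with intersections
and with transitive closures, hence with joins. -/

open Function Relation

namespace Function.Surjective

variable {α β : Type*} {f : α → β} {r : β → β → Prop}

/-- A chain `f a = u₀ r u₁ r ⋯ r uₙ = f b` lifts to `α` by choosing preimages of the `uᵢ`. -/
theorem transGen_onFun_of_transGen (hf : Surjective f) {u v : β} (huv : TransGen r u v) :
    ∀ a b, f a = u → f b = v → TransGen (r on f) a b := by
  induction huv with
  | single hr =>
    rintro a b rfl rfl
    exact .single hr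
  | @tail w _ _ hr ih =>
    rintro a b rfl rfl
    obtain ⟨m, rfl⟩ := hf w
    exact (ih a m rfl rfl).tail hr

theorem transGen_onFun_iff (hf : Surjective f) {a b : α} :
    TransGen (r on f) a b ↔ TransGen r (f a) (f b) :=
  ⟨TransGen.lift f le_rfl a b, fun h => hf.transGen_onFun_of_transGen h a b rfl rfl⟩

end Function.Surjective

theorem surjective_sand {S : Type*} [Semigroup S] {b c : WithOne S}
    (hbsc : ∀ s : S, ∃ x : S, s = sand b c x) : Surjective (sand b c) :=
  fun s => (hbsc s).imp fun _ => Eq.symm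

theorem rho_bc_injective_lattice_hom_general {S : Type*} [Semigroup S]
    (b c : WithOne S) (hbsc : ∀ s : S, ∃ x : S, s = sand b c x)
    (ρ σ : S → S → Prop) :
    ((∀ s t : S, ρ (sand b c s) (sand b c t) ↔ σ (sand b c s) (sand b c t)) →
        ∀ s t : S, ρ s t ↔ σ s t) ∧
    (∀ s t : S,
      (fun x y : S => ρ x y ∧ σ x y) (sand b c s) (sand b c t) ↔
        (ρ (sand b c s) (sand b c t) ∧ σ (sand b c s) (sand b c t))) ∧
    (∀ s t : S,
      joinRel ρ σ (sand b c s) (sand b c t) ↔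
        joinRel (fun x y : S => ρ (sand b c x) (sand b c y))
          (fun x y : S => σ (sand b c x) (sand b c y)) s t) := by
  have hsurj := surjective_sand hbsc
  refine ⟨?injective, fun _ _ => Iff.rfl, fun _ _ => hsurj.transGen_onFun_iff.symm⟩
  exact (hsurj.forall₂ (p := fun s t => ρ s t ↔ σ s t)).2

/-- If `bSc = S`, then `ρ ↦ ρ_{b,c}` is an injective lattice homomorphism from the congruence
lattice of `S` to that of `S_{cb}`: it preserves meets and joins, and `ρ_{b,c} = σ_{b,c}`
implies `ρ = σ`. -/
theorem rho_bc_injective_lattice_hom {S : Type*} [Semigroup S]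
    (b c : WithOne S) (hbsc : ∀ s : S, ∃ x : S, s = sand b c x)
    (ρ σ : S → S → Prop)
    (hρequiv : Equivalence ρ)
    (hρcomp : ∀ s t u v : S, ρ s t → ρ u v → ρ (s * u) (t * v))
    (hσequiv : Equivalence σ)
    (hσcomp : ∀ s t u v : S, σ s t → σ u v → σ (s * u) (t * v)) :
    ((∀ s t : S, ρ (sand b c s) (sand b c t) ↔ σ (sand b c s) (sand b c t)) →
        ∀ s t : S, ρ s t ↔ σ s t) ∧
    (∀ s t : S,
      (fun x y : S => ρ x y ∧ σ x y) (sand b c s) (sand b c t) ↔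
        (ρ (sand b c s) (sand b c t) ∧ σ (sand b c s) (sand b c t))) ∧
    (∀ s t : S,
      joinRel ρ σ (sand b c s) (sand b c t) ↔
        joinRel (fun x y : S => ρ (sand b c x) (sand b c y))
          (fun x y : S => σ (sand b c x) (sand b c y)) s t) :=
  rho_bc_injective_lattice_hom_general b c hbsc ρ σ
end
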